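/- Monotonic decrease of interference along the geodesic: let H_{21} ∈ ℂ^{M×M} with smallest singular value σ_M strictly less than the second smallest, let v_L be the unit right singular vector for σ_M, let w be a unit vector orthogonal to v_L with ‖H_{21}w‖² > σ_M², and set v(θ) = v_L·u·cos(φ−θ) − w·sin(φ−θ) for fixed φ ∈ (0, π/2] and unimodular u. Then IN(θ) = ‖H_{21} v(θ)‖² is strictly decreasing for θ ∈ [0, φ]. -/

import Mathlib

/-! The eigenvector `vL` of `H₂₁ᴴ H₂₁` makes `H₂₁ vL` and `H₂₁ w` orthogonal, so by Pythagoras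
`IN(θ) = σ_M² cos²(φ - θ) + ‖H₂₁ w‖² sin²(φ - θ)`, a convex combination of `σ_M²` and the larger
value `‖H₂₁ w‖²`. As `sin²` is strictly increasing on `[0, π/2]`, the weight of the larger value
shrinks as `θ` grows. -/

open Matrix

noncomputable def nsq {M : ℕ} (x : Fin M → ℂ) : ℝ := ∑ i, Complex.normSq (x i)
noncomputable def herm {M : ℕ} (a b : Fin M → ℂ) : ℂ := ∑ i, (starRingEnd ℂ) (a i) * b i

section Herm

variable {M : ℕ}

theorem herm_eq_star_dotProduct (a b : Fin M → ℂ) : herm a b = star a ⬝ᵥ b := rfl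

theorem ofReal_nsq (x : Fin M → ℂ) : (nsq x : ℂ) = herm x x := by
  simp [nsq, herm, Complex.normSq_eq_conj_mul_self]

theorem herm_smul_left (c : ℂ) (x y : Fin M → ℂ) :
    herm (c • x) y = starRingEnd ℂ c * herm x y := by
  simp [herm, Finset.mul_sum, mul_assoc]

theorem herm_mulVec_mulVec (A : Matrix (Fin M) (Fin M) ℂ) (x y : Fin M → ℂ) :
    herm (A *ᵥ x) (A *ᵥ y) = herm ((Aᴴ * A) *ᵥ x) y := by
  rw [herm_eq_star_dotProduct, herm_eq_star_dotProduct, dotProduct_mulVec, star_mulVec,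
    star_mulVec, vecMul_vecMul, conjTranspose_mul, conjTranspose_conjTranspose]

theorem nsq_smul_sub_smul (a b : ℂ) (x y : Fin M → ℂ) :
    nsq (a • x - b • y) = Complex.normSq a * nsq x + Complex.normSq b * nsq y
      - 2 * (starRingEnd ℂ a * b * herm x y).re := by
  simp only [nsq, herm, Pi.sub_apply, Pi.smul_apply, smul_eq_mul, Finset.mul_sum, Complex.re_sum]
  rw [← Finset.sum_add_distrib, ← Finset.sum_sub_distrib]
  refine Finset.sum_congr rfl fun i _ => ?_
  rw [Complex.normSq_sub, Complex.normSq_mul, Complex.normSq_mul, ← Complex.conj_re]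
  congr 3
  simp only [map_mul, Complex.conj_conj]
  ring

end Herm

section Eigenvector

variable {M : ℕ} {A : Matrix (Fin M) (Fin M) ℂ} {μ : ℝ} {v : Fin M → ℂ}

theorem herm_mulVec_mulVec_of_eigen (hv : (Aᴴ * A) *ᵥ v = (μ : ℂ) • v) (w : Fin M → ℂ) :
    herm (A *ᵥ v) (A *ᵥ w) = μ * herm v w := by
  rw [herm_mulVec_mulVec, hv, herm_smul_left, Complex.conj_ofReal]

theorem nsq_mulVec_of_eigen (hv : (Aᴴ * A) *ᵥ v = (μ : ℂ) • v) :
    nsq (A *ᵥ v) = μ * nsq v := by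
  have h := herm_mulVec_mulVec_of_eigen hv v
  rw [← ofReal_nsq, ← ofReal_nsq] at h
  exact_mod_cast h

theorem nsq_mulVec_smul_sub_smul_of_eigen (hv : (Aᴴ * A) *ᵥ v = (μ : ℂ) • v)
    {w : Fin M → ℂ} (horth : herm v w = 0) (a b : ℂ) :
    nsq (A *ᵥ (a • v - b • w)) =
      Complex.normSq a * μ * nsq v + Complex.normSq b * nsq (A *ᵥ w) := by
  rw [mulVec_sub, mulVec_smul, mulVec_smul, nsq_smul_sub_smul,
    herm_mulVec_mulVec_of_eigen hv, horth, nsq_mulVec_of_eigen hv]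
  simp only [mul_zero, Complex.zero_re]
  ring

end Eigenvector

theorem strictMonoOn_cos_sq_add_sin_sq {s t : ℝ} (hst : s < t) :
    StrictMonoOn (fun ψ ↦ s * Real.cos ψ ^ 2 + t * Real.sin ψ ^ 2) (Set.Icc 0 (Real.pi / 2)) := by
  intro x hx y hy hxy
  have hsin : Real.sin x < Real.sin y :=
    Real.strictMonoOn_sin ⟨by linarith [Real.pi_pos, hx.1], hx.2⟩
      ⟨by linarith [Real.pi_pos, hy.1], hy.2⟩ hxy
  have hsin0 : 0 ≤ Real.sin x :=
    Real.sin_nonneg_of_nonneg_of_le_pi hx.1 (by linarith [Real.pi_pos, hx.2])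
  have hsq : Real.sin x ^ 2 < Real.sin y ^ 2 := by gcongr
  simp only [Real.cos_sq', mul_sub, mul_one]
  nlinarith

theorem stmt_7_general {M : ℕ} (H₂₁ : Matrix (Fin M) (Fin M) ℂ) (σM : ℝ)
    (vL w : Fin M → ℂ) (hvL : nsq vL = 1)
    (heig : (H₂₁.conjTranspose * H₂₁).mulVec vL = (σM ^ 2 : ℂ) • vL)
    (horth : herm vL w = 0) (hgap : σM ^ 2 < nsq (H₂₁.mulVec w))
    (u : ℂ) (hu : ‖u‖ = 1) (φ : ℝ) (hφ1 : φ ≤ Real.pi / 2)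
    (θ' θ'' : ℝ) (h0 : 0 ≤ θ'') (h1 : θ'' < θ') (h2 : θ' ≤ φ) :
    nsq (H₂₁.mulVec ((u * (Real.cos (φ - θ') : ℂ)) • vL - (Real.sin (φ - θ') : ℂ) • w))
      < nsq (H₂₁.mulVec ((u * (Real.cos (φ - θ'') : ℂ)) • vL - (Real.sin (φ - θ'') : ℂ) • w)) := by
  have hu2 : Complex.normSq u = 1 := by rw [Complex.normSq_eq_norm_sq, hu, one_pow]
  have interference : ∀ ψ : ℝ,
      nsq (H₂₁ *ᵥ ((u * (Real.cos ψ : ℂ)) • vL - (Real.sin ψ : ℂ) • w))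
        = σM ^ 2 * Real.cos ψ ^ 2 + nsq (H₂₁ *ᵥ w) * Real.sin ψ ^ 2 := by
    intro ψ
    rw [nsq_mulVec_smul_sub_smul_of_eigen (μ := σM ^ 2) (by exact_mod_cast heig) horth, hvL]
    simp only [Complex.normSq_mul, Complex.normSq_ofReal, hu2]
    ring
  rw [interference, interference]
  exact strictMonoOn_cos_sq_add_sin_sq hgap ⟨by linarith, by linarith⟩
    ⟨by linarith, by linarith⟩ (by linarith)

/-- Monotonic decrease of interference along the geodesic: if v_L is the unit right
singular vector of H₂₁ for its smallest singular value σ_M, w is a unit vector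
orthogonal to v_L with ‖H₂₁w‖² > σ_M², u is unimodular, φ ∈ (0, π/2], and
v(θ) = v_L·u·cos(φ−θ) − w·sin(φ−θ), then IN(θ) = ‖H₂₁ v(θ)‖² is strictly
decreasing for θ ∈ [0, φ]. -/
theorem stmt_7 {M : ℕ} (H₂₁ : Matrix (Fin M) (Fin M) ℂ) (σM : ℝ) (hσM : 0 ≤ σM)
    (vL w : Fin M → ℂ) (hvL : nsq vL = 1) (hw : nsq w = 1)
    (heig : (H₂₁.conjTranspose * H₂₁).mulVec vL = (σM ^ 2 : ℂ) • vL)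
    (horth : herm vL w = 0) (hgap : σM ^ 2 < nsq (H₂₁.mulVec w))
    (u : ℂ) (hu : ‖u‖ = 1) (φ : ℝ) (hφ0 : 0 < φ) (hφ1 : φ ≤ Real.pi / 2)
    (θ' θ'' : ℝ) (h0 : 0 ≤ θ'') (h1 : θ'' < θ') (h2 : θ' ≤ φ) :
    nsq (H₂₁.mulVec ((u * (Real.cos (φ - θ') : ℂ)) • vL - (Real.sin (φ - θ') : ℂ) • w))
      < nsq (H₂₁.mulVec ((u * (Real.cos (φ - θ'') : ℂ)) • vL - (Real.sin (φ - θ'') : ℂ) • w)) :=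
  stmt_7_general H₂₁ σM vL w hvL heig horth hgap u hu φ hφ1 θ' θ'' h0 h1 h2
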